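/- (Continuity of f ↦ v(τ_f).) Assume the conditional absolute continuity assumption with moduli (ρ_t)_{t∈𝒯}, set ρ(ι) = Σ_{t∈𝒯} ρ_t(ι), assume Φ = Σ_{t∈𝒯}|Y_t| is square-integrable, set C = 2‖Φ‖_{L²(Q)}, and assume tightness: for every δ > 0 there is a compact K ⊆ E with Q(Ξ(X_t) ∈ K for all t ∈ 𝒯) ≥ 1 − δ. Then for every δ > 0 there exists a compact set K ⊆ E such that for every ι > 0 and all stopping boundaries f, f' satisfying f(t,ξ) ≤ f'(t,ξ) + ι and f'(t,ξ) ≤ f(t,ξ) + ι for all (t,ξ) ∈ 𝒯 × K (inequalities in [0,∞]), one has |v(τ_f) − v(τ_{f'})| ≤ C · (ρ(ι) + δ)^{1/2}. -/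

import Mathlib

/-!
Let `D` be the event that some `Ξ(X_t)` leaves the tightness compact `K`, or some `α(X_t)` falls
into the band `[min(f, f'), min(f, f') + ι)` at `Ξ(X_t)`. Off `D`, the inequalities `f ≤ α` and
`f' ≤ α` agree at every date along the path, so `τ_f = τ_{f'}`; on `D` the two rewards differ by
at most `2Φ`. Hence `|v(τ_f) - v(τ_{f'})| ≤ 2 E[Φ 1_D] ≤ 2 ‖Φ‖₂ Q(D)^{1/2}` by Cauchy–Schwarz,
and `Q(D) ≤ δ + Σ_t ρ_t(ι)` by tightness and the absolute continuity assumption applied to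
`g = min(f(t, ·), f'(t, ·))`.
-/

open MeasureTheory
open scoped ENNReal NNReal Classical

/-- First hitting time of the family of sets `S` along the path `x`, valued in `T ∪ {∞}`:
the least `t ∈ T` with `x t ∈ S t`, and `⊤` (= ∞) if there is no such `t`. -/
noncomputable def firstHit {T X : Type*} [Fintype T] [LinearOrder T]
    (S : T → Set X) (x : T → X) : WithTop T :=
  (Finset.univ.filter fun t => x t ∈ S t).min

/-- Reward collected at a (possibly infinite) stopping date: `Y t ω` if `τ = t ∈ T`, and `0`
if `τ = ∞` (that is, `Y_τ 1_{τ ≠ ∞}`). -/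
noncomputable def hitReward {T Ω : Type*} (Y : T → Ω → ℝ) (τ : WithTop T) (ω : Ω) : ℝ :=
  WithTop.recTopCoe 0 (fun t => Y t ω) τ

theorem Finset.min_eq_coe_iff {α : Type*} [LinearOrder α] {s : Finset α} {a : α} :
    s.min = a ↔ a ∈ s ∧ ∀ b ∈ s, a ≤ b :=
  ⟨fun h => ⟨mem_of_min h, fun _ hb => min_le_of_eq hb h⟩, fun ⟨ha, hmin⟩ =>
    le_antisymm (min_le ha) (Finset.le_min fun b hb => WithTop.coe_le_coe.2 (hmin b hb))⟩

section HittingTime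

variable {T X : Type*} [Fintype T] [LinearOrder T]

theorem firstHit_eq_coe_iff {S : T → Set X} {x : T → X} {t : T} :
    firstHit S x = t ↔ x t ∈ S t ∧ ∀ s < t, x s ∉ S s := by
  simp only [firstHit, Finset.min_eq_coe_iff, Finset.mem_filter, Finset.mem_univ, true_and]
  exact and_congr_right fun _ => forall_congr' fun s => by rw [← not_lt]; exact imp_not_comm

theorem firstHit_congr {S S' : T → Set X} {x : T → X} (h : ∀ t, x t ∈ S t ↔ x t ∈ S' t) :
    firstHit S x = firstHit S' x := by
  simp only [firstHit, h]

theorem measurableSet_firstHit_eq {Ω : Type*} [MeasurableSpace Ω] [MeasurableSpace X]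
    {S : T → Set X} (hS : ∀ t, MeasurableSet (S t)) {x : T → Ω → X}
    (hx : ∀ t, Measurable (x t)) (t : T) :
    MeasurableSet {ω | firstHit S (fun s => x s ω) = t} := by
  simp only [firstHit_eq_coe_iff, Set.ofPred_and, Set.ofPred_forall]
  exact (hx t (hS t)).inter <| .iInter fun s => .iInter fun _ => (hx s (hS s)).compl

end HittingTime

section Reward

variable {T Ω : Type*} [Fintype T]

theorem hitReward_eq_sum_ite (Y : T → Ω → ℝ) (τ : WithTop T) (ω : Ω) :
    hitReward Y τ ω = ∑ t : T, if τ = t then Y t ω else 0 := by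
  cases τ with
  | top => simp [hitReward]
  | coe t => simp [hitReward]

theorem measurable_hitReward [MeasurableSpace Ω] {Y : T → Ω → ℝ} (hY : ∀ t, Measurable (Y t))
    {τ : Ω → WithTop T} (hτ : ∀ t : T, MeasurableSet {ω | τ ω = (t : WithTop T)}) :
    Measurable fun ω => hitReward Y (τ ω) ω := by
  simp only [hitReward_eq_sum_ite]
  exact Finset.measurable_sum _ fun t _ => Measurable.ite (hτ t) (hY t) measurable_const

theorem abs_hitReward_le (Y : T → Ω → ℝ) (τ : WithTop T) (ω : Ω) :
    |hitReward Y τ ω| ≤ ∑ t, |Y t ω| := by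
  cases τ with
  | top => simpa [hitReward] using Finset.sum_nonneg fun t _ => abs_nonneg (Y t ω)
  | coe t =>
    exact Finset.single_le_sum (f := fun t => |Y t ω|) (fun _ _ => abs_nonneg _)
      (Finset.mem_univ t)

theorem integrable_hitReward [MeasurableSpace Ω] {μ : Measure Ω} {Y : T → Ω → ℝ}
    (hY : ∀ t, Measurable (Y t)) {τ : Ω → WithTop T}
    (hτ : ∀ t : T, MeasurableSet {ω | τ ω = t}) (hΦ : Integrable (fun ω => ∑ t, |Y t ω|) μ) :
    Integrable (fun ω => hitReward Y (τ ω) ω) μ :=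
  hΦ.mono' (measurable_hitReward hY hτ).aestronglyMeasurable
    (ae_of_all _ fun ω => abs_hitReward_le Y (τ ω) ω)

end Reward

theorem le_iff_le_of_notMem_Ico_min {α : Type*} [LinearOrder α] [Add α] {a b c ι : α}
    (hab : a ≤ b + ι) (hba : b ≤ a + ι) (hc : c ∉ Set.Ico (min a b) (min a b + ι)) :
    a ≤ c ↔ b ≤ c := by
  simp only [Set.mem_Ico, not_and, not_lt] at hc
  constructor
  · intro hac
    by_contra! hcb
    have := hc (min_le_of_left_le hac)
    rw [min_eq_left (hac.trans hcb.le)] at this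
    exact absurd (hcb.trans_le hba) this.not_gt
  · intro hbc
    by_contra! hca
    have := hc (min_le_of_right_le hbc)
    rw [min_eq_right (hbc.trans hca.le)] at this
    exact absurd (hca.trans_le hab) this.not_gt

theorem firstHit_setOf_le_eq_of_notMem_Ico {T X β : Type*} [Fintype T] [LinearOrder T]
    [LinearOrder β] [Add β] {f f' : T → X → β} {a : X → β} {ι : β} {x : T → X}
    (hclose : ∀ t, f t (x t) ≤ f' t (x t) + ι ∧ f' t (x t) ≤ f t (x t) + ι)
    (hband : ∀ t, a (x t) ∉ Set.Ico (min (f t (x t)) (f' t (x t)))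
      (min (f t (x t)) (f' t (x t)) + ι)) :
    firstHit (fun t => {y | f t y ≤ a y}) x = firstHit (fun t => {y | f' t y ≤ a y}) x :=
  firstHit_congr fun t => le_iff_le_of_notMem_Ico_min (hclose t).1 (hclose t).2 (hband t)

section Integral

variable {Ω : Type*} [MeasurableSpace Ω] {μ : Measure Ω}

theorem abs_integral_sub_le_two_mul_setIntegral {f g Φ : Ω → ℝ} {D : Set Ω}
    (hf : Integrable f μ) (hg : Integrable g μ) (hΦ : IntegrableOn Φ D μ) (hD : MeasurableSet D)
    (hfΦ : ∀ ω, |f ω| ≤ Φ ω) (hgΦ : ∀ ω, |g ω| ≤ Φ ω) (hfg : ∀ ω ∉ D, f ω = g ω) :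
    |∫ ω, f ω ∂μ - ∫ ω, g ω ∂μ| ≤ 2 * ∫ ω in D, Φ ω ∂μ := by
  have hdiff : (fun ω => |f ω - g ω|) = D.indicator fun ω => |f ω - g ω| := by
    funext ω
    by_cases hω : ω ∈ D
    · simp [hω]
    · simp [hω, hfg ω hω]
  calc |∫ ω, f ω ∂μ - ∫ ω, g ω ∂μ| = |∫ ω, (f ω - g ω) ∂μ| := by rw [integral_sub hf hg]
    _ ≤ ∫ ω, |f ω - g ω| ∂μ := abs_integral_le_integral_abs
    _ = ∫ ω in D, |f ω - g ω| ∂μ := by rw [← integral_indicator hD, ← hdiff]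
    _ ≤ ∫ ω in D, 2 * Φ ω ∂μ := by
        refine setIntegral_mono (hf.sub hg).abs.integrableOn (hΦ.const_mul 2) fun ω => ?_
        linarith [abs_sub (f ω) (g ω), hfΦ ω, hgΦ ω]
    _ = 2 * ∫ ω in D, Φ ω ∂μ := integral_const_mul 2 _

theorem setIntegral_le_sqrt_measureReal_mul_sqrt_integral_sq [IsFiniteMeasure μ] {Φ : Ω → ℝ}
    (hΦ : MemLp Φ 2 μ) (hΦ0 : ∀ ω, 0 ≤ Φ ω) (D : Set Ω) :
    ∫ ω in D, Φ ω ∂μ ≤ √(μ.real D) * √(∫ ω, Φ ω ^ 2 ∂μ) := by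
  have hΦD : MemLp Φ (ENNReal.ofReal 2) (μ.restrict D) := by
    simpa using hΦ.restrict D
  have holder := integral_mul_le_Lp_mul_Lq_of_nonneg (μ := μ.restrict D)
    Real.HolderConjugate.two_two (ae_of_all _ fun _ => zero_le_one) (ae_of_all _ hΦ0)
    (by simpa using memLp_const (μ := μ.restrict D) (1 : ℝ)) hΦD
  simp only [one_mul, one_pow, integral_const, smul_eq_mul, mul_one, Real.rpow_two,
    ← Real.sqrt_eq_rpow, measureReal_restrict_apply_univ] at holder
  refine holder.trans (mul_le_mul_of_nonneg_left (Real.sqrt_le_sqrt ?_) (Real.sqrt_nonneg _))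
  exact setIntegral_le_integral ((memLp_two_iff_integrable_sq hΦ.1).1 hΦ)
    (ae_of_all _ fun ω => sq_nonneg (Φ ω))

theorem abs_integral_sub_le_of_eqOn_compl [IsFiniteMeasure μ] {f g Φ : Ω → ℝ} {D : Set Ω}
    (hf : Integrable f μ) (hg : Integrable g μ) (hΦ : MemLp Φ 2 μ)
    (hfΦ : ∀ ω, |f ω| ≤ Φ ω) (hgΦ : ∀ ω, |g ω| ≤ Φ ω) (hfg : ∀ ω ∉ D, f ω = g ω) :
    |∫ ω, f ω ∂μ - ∫ ω, g ω ∂μ| ≤ 2 * (√(μ.real D) * √(∫ ω, Φ ω ^ 2 ∂μ)) := by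
  have hΦ0 : ∀ ω, 0 ≤ Φ ω := fun ω => (abs_nonneg _).trans (hfΦ ω)
  calc _ ≤ 2 * ∫ ω in toMeasurable μ D, Φ ω ∂μ :=
        abs_integral_sub_le_two_mul_setIntegral hf hg (hΦ.integrable one_le_two).integrableOn
          (measurableSet_toMeasurable μ D) hfΦ hgΦ
          fun ω hω => hfg ω fun hD => hω (subset_toMeasurable μ D hD)
    _ ≤ 2 * (√(μ.real (toMeasurable μ D)) * √(∫ ω, Φ ω ^ 2 ∂μ)) := by
        grw [setIntegral_le_sqrt_measureReal_mul_sqrt_integral_sq hΦ hΦ0]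
    _ = 2 * (√(μ.real D) * √(∫ ω, Φ ω ^ 2 ∂μ)) := by
        rw [measureReal_def, measure_toMeasurable, ← measureReal_def]

theorem measureReal_compl_union_iUnion_le {ι : Type*} [Fintype ι] [IsProbabilityMeasure μ]
    {G : Set Ω} (hG : MeasurableSet G) {C : ι → Set Ω} {δ : ℝ} {r : ι → ℝ}
    (hGδ : 1 - δ ≤ μ.real G) (hC : ∀ i, μ.real (C i) ≤ r i) :
    μ.real (Gᶜ ∪ ⋃ i, C i) ≤ ∑ i, r i + δ := calc
  _ ≤ μ.real Gᶜ + ∑ i, μ.real (C i) :=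
    (measureReal_union_le _ _).trans (add_le_add le_rfl (measureReal_iUnion_fintype_le _))
  _ ≤ δ + ∑ i, r i := by
    gcongr with i
    · rw [probReal_compl_eq_one_sub hG]
      linarith
    · exact hC i
  _ = ∑ i, r i + δ := add_comm _ _

end Integral

theorem value_functional_continuity_general
    {T Ω X E : Type*} [Fintype T] [LinearOrder T]
    [MeasurableSpace Ω]
    [MeasurableSpace X]
    [TopologicalSpace E] [T2Space E] [MeasurableSpace E] [BorelSpace E]
    (Q : Measure Ω) [IsProbabilityMeasure Q]
    (α : X → ℝ≥0) (hα : Measurable α) (Ξ : X → E) (hΞ : Measurable Ξ)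
    (Xp : T → Ω → X) (hX : ∀ t, Measurable (Xp t))
    (Y : T → Ω → ℝ) (hY : ∀ t, Measurable (Y t))
    (hΦ : Integrable (fun ω => (∑ t, |Y t ω|) ^ 2) Q)
    (ρ : T → ℝ≥0∞ → ℝ)
    -- conditional absolute continuity assumption
    (hAC : ∀ t (g : E → ℝ≥0∞), Measurable g → ∀ ι : ℝ≥0∞, 0 < ι →
      (Q {ω | g (Ξ (Xp t ω)) ≤ (α (Xp t ω) : ℝ≥0∞) ∧
              (α (Xp t ω) : ℝ≥0∞) < g (Ξ (Xp t ω)) + ι}).toReal ≤ ρ t ι)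
    -- tightness of the laws of (Ξ(X_t))
    (htight : ∀ δ : ℝ, 0 < δ → ∃ K : Set E, IsCompact K ∧
      1 - δ ≤ (Q {ω | ∀ t, Ξ (Xp t ω) ∈ K}).toReal) :
    ∀ δ : ℝ, 0 < δ → ∃ K : Set E, IsCompact K ∧
      ∀ ι : ℝ≥0∞, 0 < ι →
      ∀ f f' : T → E → ℝ≥0∞,
        (∀ t, LowerSemicontinuous (f t)) → (∀ t, LowerSemicontinuous (f' t)) →
        (∀ t, ∀ ξ ∈ K, f t ξ ≤ f' t ξ + ι ∧ f' t ξ ≤ f t ξ + ι) →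
        |(∫ ω, hitReward Y
              (firstHit (fun t => {x | f t (Ξ x) ≤ (α x : ℝ≥0∞)}) (fun t => Xp t ω)) ω ∂Q) -
          ∫ ω, hitReward Y
              (firstHit (fun t => {x | f' t (Ξ x) ≤ (α x : ℝ≥0∞)}) (fun t => Xp t ω)) ω ∂Q| ≤
        (2 * Real.sqrt (∫ ω, (∑ t, |Y t ω|) ^ 2 ∂Q)) *
          Real.sqrt ((∑ t, ρ t ι) + δ) := by
  intro δ hδ
  obtain ⟨K, hK, hKQ⟩ := htight δ hδ
  refine ⟨K, hK, fun ι hι f f' hf hf' hclose => ?_⟩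
  have hΦ2 : MemLp (fun ω => ∑ t, |Y t ω|) 2 Q := (memLp_two_iff_integrable_sq
    (Finset.measurable_sum _ fun t _ => (hY t).abs).aestronglyMeasurable).2 hΦ
  have hαm : Measurable fun x => (α x : ℝ≥0∞) := hα.coe_nnreal_ennreal
  have hhit : ∀ g : T → E → ℝ≥0∞, (∀ t, LowerSemicontinuous (g t)) → ∀ t : T,
      MeasurableSet {ω | firstHit (fun t => {x | g t (Ξ x) ≤ (α x : ℝ≥0∞)}) (Xp · ω) = t} :=
    fun g hg => measurableSet_firstHit_eq
      (fun t => measurableSet_le ((hg t).measurable.comp hΞ) hαm) hX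
  set fmin : T → E → ℝ≥0∞ := fun t ξ => min (f t ξ) (f' t ξ)
  set D := {ω | ∀ t, Ξ (Xp t ω) ∈ K}ᶜ ∪ ⋃ t,
    {ω | (α (Xp t ω) : ℝ≥0∞) ∈ Set.Ico (fmin t (Ξ (Xp t ω))) (fmin t (Ξ (Xp t ω)) + ι)}
  have hinK : MeasurableSet {ω | ∀ t, Ξ (Xp t ω) ∈ K} := by
    simp only [Set.ofPred_forall]
    exact .iInter fun t => hΞ.comp (hX t) hK.isClosed.measurableSet
  have hQD : Q.real D ≤ ∑ t, ρ t ι + δ := measureReal_compl_union_iUnion_le hinK hKQ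
    fun t => hAC t (fmin t) ((hf t).measurable.min (hf' t).measurable) ι hι
  have hsame : ∀ ω ∉ D,
      hitReward Y (firstHit (fun t => {x | f t (Ξ x) ≤ (α x : ℝ≥0∞)}) (Xp · ω)) ω =
        hitReward Y (firstHit (fun t => {x | f' t (Ξ x) ≤ (α x : ℝ≥0∞)}) (Xp · ω)) ω := by
    intro ω hω
    simp only [D, Set.mem_union, Set.mem_compl_iff, Set.mem_iUnion, not_or, not_not,
      not_exists] at hω
    exact congrArg (hitReward Y · ω) <| firstHit_setOf_le_eq_of_notMem_Ico
      (f := fun t x => f t (Ξ x)) (f' := fun t x => f' t (Ξ x))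
      (fun t => hclose t _ (hω.1 t)) hω.2
  have hΦ1 := hΦ2.integrable one_le_two
  calc _ ≤ 2 * (√(Q.real D) * √(∫ ω, (∑ t, |Y t ω|) ^ 2 ∂Q)) :=
        abs_integral_sub_le_of_eqOn_compl (integrable_hitReward hY (hhit f hf) hΦ1)
          (integrable_hitReward hY (hhit f' hf') hΦ1) hΦ2
          (fun ω => abs_hitReward_le _ _ _) (fun ω => abs_hitReward_le _ _ _) hsame
    _ ≤ 2 * (√(∑ t, ρ t ι + δ) * √(∫ ω, (∑ t, |Y t ω|) ^ 2 ∂Q)) := by gcongr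
    _ = _ := by ring

/-- **Continuity of `f ↦ v(τ_f)`** (Theorem 4.2).

Under the conditional absolute continuity assumption with moduli `(ρ_t)`, square
integrability of `Φ = Σ_t |Y_t|` (with `C = 2‖Φ‖_{L²(Q)}`), and tightness of the laws of
`(Ξ(X_t))`: for every `δ > 0` there is a compact `K ⊆ E` such that whenever two stopping
boundaries `f, f'` (lower semicontinuous in space, `[0,∞]`-valued) are uniformly `ι`-close on
`T × K`, the values `v(τ_f) = E[Y_{τ_f} 1_{τ_f ≠ ∞}]` of their hitting times satisfy
`|v(τ_f) − v(τ_{f'})| ≤ C (ρ(ι) + δ)^{1/2}` where `ρ(ι) = Σ_t ρ_t(ι)`. -/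
theorem value_functional_continuity
    {T Ω X E : Type*} [Fintype T] [Nonempty T] [LinearOrder T]
    [MeasurableSpace Ω]
    [TopologicalSpace X] [MeasurableSpace X] [BorelSpace X]
    [TopologicalSpace E] [T2Space E] [MeasurableSpace E] [BorelSpace E]
    (Q : Measure Ω) [IsProbabilityMeasure Q]
    (α : X → ℝ≥0) (hα : Measurable α) (Ξ : X → E) (hΞ : Measurable Ξ)
    (Xp : T → Ω → X) (hX : ∀ t, Measurable (Xp t))
    (Y : T → Ω → ℝ) (hY : ∀ t, Measurable (Y t))
    (hΦ : Integrable (fun ω => (∑ t, |Y t ω|) ^ 2) Q)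
    (ρ : T → ℝ≥0∞ → ℝ) (hρ : ∀ t ι, ρ t ι ∈ Set.Icc (0 : ℝ) 1)
    -- conditional absolute continuity assumption
    (hAC : ∀ t (g : E → ℝ≥0∞), Measurable g → ∀ ι : ℝ≥0∞, 0 < ι →
      (Q {ω | g (Ξ (Xp t ω)) ≤ (α (Xp t ω) : ℝ≥0∞) ∧
              (α (Xp t ω) : ℝ≥0∞) < g (Ξ (Xp t ω)) + ι}).toReal ≤ ρ t ι)
    -- tightness of the laws of (Ξ(X_t))
    (htight : ∀ δ : ℝ, 0 < δ → ∃ K : Set E, IsCompact K ∧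
      1 - δ ≤ (Q {ω | ∀ t, Ξ (Xp t ω) ∈ K}).toReal) :
    ∀ δ : ℝ, 0 < δ → ∃ K : Set E, IsCompact K ∧
      ∀ ι : ℝ≥0∞, 0 < ι →
      ∀ f f' : T → E → ℝ≥0∞,
        (∀ t, LowerSemicontinuous (f t)) → (∀ t, LowerSemicontinuous (f' t)) →
        (∀ t, ∀ ξ ∈ K, f t ξ ≤ f' t ξ + ι ∧ f' t ξ ≤ f t ξ + ι) →
        |(∫ ω, hitReward Y
              (firstHit (fun t => {x | f t (Ξ x) ≤ (α x : ℝ≥0∞)}) (fun t => Xp t ω)) ω ∂Q) -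
          ∫ ω, hitReward Y
              (firstHit (fun t => {x | f' t (Ξ x) ≤ (α x : ℝ≥0∞)}) (fun t => Xp t ω)) ω ∂Q| ≤
        (2 * Real.sqrt (∫ ω, (∑ t, |Y t ω|) ^ 2 ∂Q)) *
          Real.sqrt ((∑ t, ρ t ι) + δ) :=
  value_functional_continuity_general Q α hα Ξ hΞ Xp hX Y hY hΦ ρ hAC htight
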